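/- Let R be a commutative ring, equip the free algebra R⟨X₁,…,Xₙ⟩ with a weight ℕ-gradation determined by positive integer degrees deg Xᵢ = nᵢ, let ≺ be an ℕ-graded monomial ordering on the standard monomial basis B, and let G be a monic Gröbner basis of the ideal I = ⟨G⟩. If the monomial algebra R⟨X₁,…,Xₙ⟩/⟨LM(G)⟩ is left Artinian (Artinian as a left module over itself), then both R⟨X₁,…,Xₙ⟩/⟨LH(G)⟩ and A = R⟨X₁,…,Xₙ⟩/I are left Artinian. -/

import Mathlib

noncomputable section
open MonoidAlgebra
open scoped Classical

/-- Words in the alphabet `X_1, ..., X_n`: the standard monomial basis `B`. -/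
abbrev Word (n : ℕ) : Type := FreeMonoid (Fin n)

/-- The free `R`-algebra `R⟨X_1, ..., X_n⟩`, realized as the monoid algebra of the
free monoid on `n` letters over `R`. -/
abbrev FreeAlg (R : Type) [CommRing R] (n : ℕ) : Type := MonoidAlgebra R (Word n)

variable {R : Type} [CommRing R] {n : ℕ}

/-- The monomial (word) `w` viewed as an element of the free algebra. -/
def mono (R : Type) [CommRing R] {n : ℕ} (w : Word n) : FreeAlg R n :=
  MonoidAlgebra.of R (Word n) w

/-- A monomial ordering: a well-ordering on words compatible with two-sided multiplication. -/
def IsMonomialOrder (n : ℕ) [LinearOrder (Word n)] : Prop :=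
  WellFoundedLT (Word n) ∧ ∀ w u v s : Word n, u < v → w * u * s < w * v * s

/-- The leading monomial of `f` (with junk value `1` for `f = 0`). -/
def LMon [LinearOrder (Word n)] (f : FreeAlg R n) : Word n :=
  if h : f = 0 then 1 else f.coeff.support.max'
    (Finsupp.support_nonempty_iff.mpr (fun h' => h (MonoidAlgebra.coeff_eq_zero.mp h')))

/-- The leading coefficient of `f`. -/
def LCoef [LinearOrder (Word n)] (f : FreeAlg R n) : R := f.coeff (LMon f)

/-- `f` is monic: it is nonzero and its leading coefficient is `1`. -/
def IsMonic [LinearOrder (Word n)] (f : FreeAlg R n) : Prop := f ≠ 0 ∧ LCoef f = 1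

/-- `v` divides `u` as words: `u = w * v * s` for some words `w, s`. -/
def MDvd {n : ℕ} (v u : Word n) : Prop := ∃ w s : Word n, u = w * v * s

/-- `G` is a monic Gröbner basis of the two-sided ideal `I`: every element of `G` is monic,
and the leading monomial of every nonzero element of `I` is divisible by the leading
monomial of some element of `G`. -/
def IsMonicGB [LinearOrder (Word n)] (G : Set (FreeAlg R n))
    (I : TwoSidedIdeal (FreeAlg R n)) : Prop :=
  (∀ g ∈ G, IsMonic g) ∧ ∀ f ∈ I, f ≠ 0 → ∃ g ∈ G, MDvd (LMon g) (LMon f)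

/-- The set `LM(S)` of leading monomials of the nonzero elements of `S`. -/
def LMset [LinearOrder (Word n)] (S : Set (FreeAlg R n)) : Set (Word n) :=
  {w | ∃ f ∈ S, f ≠ 0 ∧ LMon f = w}

/-- The weight degree of a word, for the weights `deg Xᵢ = d i`. -/
def wdeg {n : ℕ} (d : Fin n → ℕ) (w : Word n) : ℕ := ((FreeMonoid.toList w).map d).sum

/-- The maximal weight degree occurring in `f`. -/
def maxdeg (d : Fin n → ℕ) (f : FreeAlg R n) : ℕ := f.coeff.support.sup (wdeg d)

/-- The ℕ-leading homogeneous element `LH(f)` of `f`: the sum of the terms of `f` of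
maximal weight degree. -/
def LH (d : Fin n → ℕ) (f : FreeAlg R n) : FreeAlg R n :=
  ∑ w ∈ f.coeff.support.filter (fun w => wdeg d w = maxdeg d f), MonoidAlgebra.single w (f.coeff w)

/-- The set `LH(S)` of leading homogeneous elements of the nonzero elements of `S`. -/
def LHset (d : Fin n → ℕ) (S : Set (FreeAlg R n)) : Set (FreeAlg R n) :=
  {x | ∃ f ∈ S, f ≠ 0 ∧ x = LH d f}

/-- An ℕ-graded monomial ordering with respect to the weights `d`: a monomial ordering
such that words of smaller degree are smaller. -/
def IsGradedMonomialOrder {n : ℕ} (d : Fin n → ℕ) [LinearOrder (Word n)] : Prop :=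
  IsMonomialOrder n ∧ ∀ u v : Word n, wdeg d u < wdeg d v → u < v

/-- The quotient ring of the free algebra by a two-sided ideal. -/
abbrev QuotRing (I : TwoSidedIdeal (FreeAlg R n)) : Type := I.ringCon.Quotient

/-!
For a left ideal `L` of `R⟨X⟩` and a word `w`, the coefficients at `w` of the elements of `L`
supported below `w` form an additive group `C_w(L)` (`leadCoeffs`). As the ordering is compatible
with multiplication, the elements whose coefficient at every `w` lies in `C_w(L)` form a left
ideal. It contains the leading terms of `L`, and when `L ⊇ ⟨G⟩` also `J = ⟨LM(G)⟩`, because the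
monic elements `c·p·g·q ∈ L` give `C_w(L) = R` at every multiple `w = p·LM(g)·q`. So if
`⟨G⟩ ⊆ L₁ ⊆ L₂` and `J + ⟨LT(L₂)⟩ ⊆ J + ⟨LT(L₁)⟩`, every `f ∈ L₂` can be reduced modulo `L₁` to an
element of `L₂` with smaller leading monomial, and well-foundedness gives `L₂ = L₁`. Hence
`L ↦ J + ⟨LT(L)⟩` is strictly monotone on left ideals containing `⟨G⟩`, and strictly descending
chains of left ideals of `R⟨X⟩/⟨G⟩` map to strictly descending chains in `R⟨X⟩/J`.

As the ordering is graded, `LH(g)` has the same leading monomial and coefficient as `g`, so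
`LM(LH(G)) = LM(G)` and the same argument applies to `LH(G)`.
-/

theorem isArtinianRing_quotient_of_strictMono {S : Type*} [Ring S] (I J : TwoSidedIdeal S)
    [IsArtinianRing J.ringCon.Quotient] (Φ : Submodule S S → Submodule S S)
    (hΦ : ∀ L₁ L₂, I.asIdeal ≤ L₁ → L₁ < L₂ → Φ L₁ < Φ L₂) (hJ : ∀ L, J.asIdeal ≤ Φ L) :
    IsArtinianRing I.ringCon.Quotient := by
  have : RingHomSurjective I.ringCon.mk' := ⟨I.ringCon.mk'_surjective⟩
  have : RingHomSurjective J.ringCon.mk' := ⟨J.ringCon.mk'_surjective⟩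
  let π := I.ringCon.mk'.toSemilinearMap
  let ρ := J.ringCon.mk'.toSemilinearMap
  have hker : LinearMap.ker ρ = J.asIdeal := by
    ext x
    have hx := TwoSidedIdeal.mem_ker (f := J.ringCon.mk') (x := x)
    rw [TwoSidedIdeal.ker_ringCon_mk'] at hx
    exact hx.symm
  have hIcomap : ∀ N : Submodule I.ringCon.Quotient I.ringCon.Quotient, I.asIdeal ≤ N.comap π :=
    fun N x hx => by
      rw [TwoSidedIdeal.mem_asIdeal, ← TwoSidedIdeal.ker_ringCon_mk' I, TwoSidedIdeal.mem_ker] at hx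
      simp [π, hx]
  refine StrictMono.wellFoundedLT (f := fun N => (Φ (N.comap π)).map ρ) fun N₁ N₂ h => ?_
  have hlt := hΦ _ _ (hIcomap N₁)
    (Submodule.comap_strictMono_of_surjective I.ringCon.mk'_surjective h)
  refine Submodule.map_lt_map_of_le_of_sup_lt_sup hlt.le ?_
  rwa [hker, sup_eq_left.mpr (hJ _), sup_eq_left.mpr (hJ _)]

section LeadingMonomial

variable [LinearOrder (Word n)] {f h : FreeAlg R n} {u w : Word n}

theorem LMon_mem_support (hf : f ≠ 0) : LMon f ∈ f.coeff.support := by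
  rw [LMon, dif_neg hf]
  exact Finset.max'_mem _ _

theorem coeff_LMon_ne_zero (hf : f ≠ 0) : f.coeff (LMon f) ≠ 0 :=
  Finsupp.mem_support_iff.mp (LMon_mem_support hf)

theorem le_LMon (hu : u ∈ f.coeff.support) : u ≤ LMon f := by
  have hf : f ≠ 0 := by
    rintro rfl
    simp at hu
  rw [LMon, dif_neg hf]
  exact Finset.le_max' _ _ hu

theorem LMon_eq_of_coeff_ne_zero (hw : f.coeff w ≠ 0) (hsupp : ↑f.coeff.support ⊆ Set.Iic w) :
    LMon f = w :=
  le_antisymm (hsupp (LMon_mem_support fun hf => hw (by simp [hf])))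
    (le_LMon (Finsupp.mem_support_iff.mpr hw))

theorem LMon_sub_lt (hfh : f - h ≠ 0) (hsupp : ↑h.coeff.support ⊆ Set.Iic (LMon f))
    (hcoeff : h.coeff (LMon f) = LCoef f) : LMon (f - h) < LMon f := by
  have hle : LMon (f - h) ≤ LMon f := by
    rcases Finset.mem_union.mp (Finsupp.support_sub (LMon_mem_support hfh)) with hu | hu
    exacts [le_LMon hu, hsupp hu]
  refine hle.lt_of_ne fun heq => coeff_LMon_ne_zero hfh ?_
  rw [heq, coeff_sub, Finsupp.sub_apply, hcoeff, LCoef, sub_self]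

end LeadingMonomial

theorem MDvd.mul_left {v u : Word n} (h : MDvd v u) (a : Word n) : MDvd v (a * u) := by
  obtain ⟨p, q, rfl⟩ := h
  exact ⟨a * p, q, by simp only [mul_assoc]⟩

theorem MDvd.mul_right {v u : Word n} (h : MDvd v u) (a : Word n) : MDvd v (u * a) := by
  obtain ⟨p, q, rfl⟩ := h
  exact ⟨p, q * a, by simp only [mul_assoc]⟩

theorem exists_mdvd_of_mem_span_mono {V : Set (Word n)} {x : FreeAlg R n}
    (hx : x ∈ TwoSidedIdeal.span (mono R '' V)) {w : Word n} (hw : x.coeff w ≠ 0) :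
    ∃ v ∈ V, MDvd v w := by
  revert w
  induction hx using TwoSidedIdeal.span_induction with
  | mem x hx =>
    obtain ⟨v, hv, rfl⟩ := hx
    intro w hw
    obtain rfl : w = v := (Finsupp.single_apply_ne_zero.mp hw).1
    exact ⟨w, hv, 1, 1, by simp⟩
  | zero => simp
  | add x y _ _ hx hy =>
    intro w hw
    by_cases hxw : x.coeff w = 0
    · exact hy (by simpa [hxw] using hw)
    · exact hx hxw
  | neg x _ hx => exact fun hw => hx (by simpa using hw)
  | left_absorb a x _ hx =>
    intro w hw
    obtain ⟨u, -, t, ht, rfl⟩ :=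
      Finset.mem_mul.mp (support_coeff_mul_subset a x (Finsupp.mem_support_iff.mpr hw))
    obtain ⟨v, hv, hvt⟩ := hx (Finsupp.mem_support_iff.mp ht)
    exact ⟨v, hv, hvt.mul_left u⟩
  | right_absorb b x _ hx =>
    intro w hw
    obtain ⟨t, ht, u, -, rfl⟩ :=
      Finset.mem_mul.mp (support_coeff_mul_subset x b (Finsupp.mem_support_iff.mpr hw))
    obtain ⟨v, hv, hvt⟩ := hx (Finsupp.mem_support_iff.mp ht)
    exact ⟨v, hv, hvt.mul_right u⟩

theorem MonoidAlgebra.coeff_single_mul_mul_single {k M : Type*} [Semiring k] [CancelMonoid M]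
    (p q w : M) (r s : k) (x : MonoidAlgebra k M) :
    (single p r * x * single q s).coeff (p * w * q) = r * x.coeff w * s := by
  rw [coeff_mul_single_mul, coeff_single_mul_mul]

section MonomialOrder

variable [LinearOrder (Word n)]

theorem IsMonomialOrder.mul_le_mul (hord : IsMonomialOrder n) (p q : Word n) {u v : Word n}
    (h : u ≤ v) : p * u * q ≤ p * v * q :=
  h.eq_or_lt.elim (fun h => h ▸ le_rfl) fun h => (hord.2 p u v q h).le

theorem IsMonomialOrder.support_single_mul_mul_single_subset (hord : IsMonomialOrder n)
    (p q : Word n) (r s : R) {x : FreeAlg R n} {w : Word n}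
    (hx : ↑x.coeff.support ⊆ Set.Iic w) :
    ↑(single p r * x * single q s).coeff.support ⊆ Set.Iic (p * w * q) := by
  intro t ht
  obtain ⟨t', ht', rfl⟩ := Finset.mem_image.mp (support_coeff_mul_single_subset _ _ _ ht)
  obtain ⟨u, hu, rfl⟩ := Finset.mem_image.mp (support_coeff_single_mul_subset _ _ _ ht')
  exact hord.mul_le_mul p q (hx hu)

end MonomialOrder

section LeadCoeffs

variable [LinearOrder (Word n)] (L : Submodule (FreeAlg R n) (FreeAlg R n))

def leadCoeffs (w : Word n) : AddSubgroup R where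
  carrier := {c | ∃ h ∈ L, ↑h.coeff.support ⊆ Set.Iic w ∧ h.coeff w = c}
  zero_mem' := ⟨0, L.zero_mem, by simp, rfl⟩
  add_mem' := by
    rintro _ _ ⟨h₁, hh₁, hs₁, rfl⟩ ⟨h₂, hh₂, hs₂, rfl⟩
    refine ⟨h₁ + h₂, L.add_mem hh₁ hh₂, fun t ht => ?_, rfl⟩
    rcases Finset.mem_union.mp (Finsupp.support_add ht) with ht | ht
    exacts [hs₁ ht, hs₂ ht]
  neg_mem' := by
    rintro _ ⟨h, hh, hs, rfl⟩
    exact ⟨-h, L.neg_mem hh, by simpa using hs, rfl⟩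

variable {L}

theorem LCoef_mem_leadCoeffs {f : FreeAlg R n} (hf : f ∈ L) : LCoef f ∈ leadCoeffs L (LMon f) :=
  ⟨f, hf, fun _ hu => le_LMon hu, rfl⟩

theorem IsMonomialOrder.mul_mem_leadCoeffs (hord : IsMonomialOrder n) (r : R) (u : Word n)
    {w : Word n} {c : R} (hc : c ∈ leadCoeffs L w) : r * c ∈ leadCoeffs L (u * w) := by
  obtain ⟨h, hh, hs, rfl⟩ := hc
  refine ⟨single u r * h * single 1 1, ?_, ?_, ?_⟩
  · rw [← one_def, mul_one]
    exact L.smul_mem _ hh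
  · simpa using hord.support_single_mul_mul_single_subset u 1 r 1 hs
  · simpa using coeff_single_mul_mul_single u 1 w r 1 h

theorem IsMonomialOrder.leadCoeffs_eq_top (hord : IsMonomialOrder n)
    {I : TwoSidedIdeal (FreeAlg R n)} (hIL : I.asIdeal ≤ L) {g : FreeAlg R n} (hg : g ∈ I)
    (hmonic : IsMonic g) (p q : Word n) : leadCoeffs L (p * LMon g * q) = ⊤ := by
  refine eq_top_iff.mpr fun c _ => ⟨single p c * g * single q 1,
    hIL (TwoSidedIdeal.mem_asIdeal.mpr (I.mul_mem_right _ _ (I.mul_mem_left _ _ hg))),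
    hord.support_single_mul_mul_single_subset p q c 1 fun _ hu => le_LMon hu, ?_⟩
  rw [coeff_single_mul_mul_single, ← LCoef, hmonic.2, mul_one, mul_one]

variable (L) in
def leadCoeffsIdeal (hord : IsMonomialOrder n) : Submodule (FreeAlg R n) (FreeAlg R n) where
  carrier := {x | ∀ w, x.coeff w ∈ leadCoeffs L w}
  add_mem' hx hy w := (leadCoeffs L w).add_mem (hx w) (hy w)
  zero_mem' w := (leadCoeffs L w).zero_mem
  smul_mem' a x hx := by
    induction a using MonoidAlgebra.induction_linear with
    | zero => simp
    | add a b ha hb =>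
      intro w
      rw [add_smul, coeff_add, Finsupp.add_apply]
      exact (leadCoeffs L w).add_mem (ha w) (hb w)
    | single u r =>
      intro w
      by_cases hw : ∃ t, u * t = w
      · obtain ⟨t, rfl⟩ := hw
        rw [smul_eq_mul, coeff_single_mul_mul]
        exact hord.mul_mem_leadCoeffs r u (hx t)
      · rw [smul_eq_mul, coeff_single_mul_of_forall_mul_ne _ _ fun t ht => hw ⟨t, ht⟩]
        exact (leadCoeffs L w).zero_mem

end LeadCoeffs

section LeadIdeal

variable [LinearOrder (Word n)]

def LTerm (f : FreeAlg R n) : FreeAlg R n := single (LMon f) (LCoef f)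

def leadIdeal (L : Submodule (FreeAlg R n) (FreeAlg R n)) : Submodule (FreeAlg R n) (FreeAlg R n) :=
  Submodule.span (FreeAlg R n) (LTerm '' L)

theorem leadIdeal_mono : Monotone (leadIdeal (R := R) (n := n)) :=
  fun _ _ h => Submodule.span_mono (Set.image_mono h)

variable {G : Set (FreeAlg R n)} {L L₁ L₂ : Submodule (FreeAlg R n) (FreeAlg R n)}

theorem IsMonomialOrder.leadIdeal_le_leadCoeffsIdeal (hord : IsMonomialOrder n) :
    leadIdeal L ≤ leadCoeffsIdeal L hord := by
  refine Submodule.span_le.mpr ?_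
  rintro _ ⟨f, hf, rfl⟩ w
  rw [LTerm, coeff_single, Finsupp.single_apply]
  split_ifs with hw
  · exact hw ▸ LCoef_mem_leadCoeffs hf
  · exact (leadCoeffs L w).zero_mem

theorem IsMonomialOrder.span_LMset_le_leadCoeffsIdeal (hord : IsMonomialOrder n)
    (hG : ∀ g ∈ G, IsMonic g) (hGL : (TwoSidedIdeal.span G).asIdeal ≤ L) :
    (TwoSidedIdeal.span (mono R '' LMset G)).asIdeal ≤ leadCoeffsIdeal L hord := by
  intro x hx w
  rw [TwoSidedIdeal.mem_asIdeal] at hx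
  by_cases hw : x.coeff w = 0
  · rw [hw]
    exact (leadCoeffs L w).zero_mem
  · obtain ⟨v, ⟨g, hg, -, hgv⟩, p, q, hw'⟩ := exists_mdvd_of_mem_span_mono hx hw
    rw [hw', ← hgv, hord.leadCoeffs_eq_top hGL (TwoSidedIdeal.subset_span hg) (hG g hg)]
    trivial

theorem IsMonomialOrder.le_of_sup_leadIdeal_le (hord : IsMonomialOrder n)
    (hG : ∀ g ∈ G, IsMonic g) (hGL : (TwoSidedIdeal.span G).asIdeal ≤ L₁) (h12 : L₁ ≤ L₂)
    (hlead : (TwoSidedIdeal.span (mono R '' LMset G)).asIdeal ⊔ leadIdeal L₂ ≤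
      (TwoSidedIdeal.span (mono R '' LMset G)).asIdeal ⊔ leadIdeal L₁) :
    L₂ ≤ L₁ := by
  suffices ∀ w, ∀ f ∈ L₂, LMon f = w → f ∈ L₁ from fun f hf => this _ f hf rfl
  intro w
  induction w using hord.1.induction with
  | _ w ih =>
    rintro f hf rfl
    have hLT : LTerm f ∈ leadCoeffsIdeal L₁ hord :=
      sup_le (hord.span_LMset_le_leadCoeffsIdeal hG hGL) hord.leadIdeal_le_leadCoeffsIdeal
        (hlead (Submodule.mem_sup_right (Submodule.subset_span ⟨f, hf, rfl⟩)))
    obtain ⟨h, hh, hsupp, hcoeff⟩ : LCoef f ∈ leadCoeffs L₁ (LMon f) := by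
      simpa [LTerm] using hLT (LMon f)
    have hfh : f - h ∈ L₁ := by
      by_cases h0 : f - h = 0
      · rw [h0]
        exact L₁.zero_mem
      · exact ih _ (LMon_sub_lt h0 hsupp hcoeff) _ (L₂.sub_mem hf (h12 hh)) rfl
    simpa using L₁.add_mem hfh hh

theorem IsMonomialOrder.sup_leadIdeal_lt (hord : IsMonomialOrder n)
    (hG : ∀ g ∈ G, IsMonic g) (hGL : (TwoSidedIdeal.span G).asIdeal ≤ L₁) (h12 : L₁ < L₂) :
    (TwoSidedIdeal.span (mono R '' LMset G)).asIdeal ⊔ leadIdeal L₁ <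
      (TwoSidedIdeal.span (mono R '' LMset G)).asIdeal ⊔ leadIdeal L₂ :=
  lt_of_le_not_ge (sup_le_sup_left (leadIdeal_mono h12.le) _) fun hge =>
    h12.not_ge (hord.le_of_sup_leadIdeal_le hG hGL h12.le hge)

end LeadIdeal

theorem IsMonomialOrder.isArtinianRing_quotRing_span [LinearOrder (Word n)]
    (hord : IsMonomialOrder n) (G : Set (FreeAlg R n)) (hG : ∀ g ∈ G, IsMonic g)
    [IsArtinianRing (QuotRing (TwoSidedIdeal.span (mono R '' LMset G)))] :
    IsArtinianRing (QuotRing (TwoSidedIdeal.span G)) :=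
  isArtinianRing_quotient_of_strictMono _ _ _
    (fun _ _ hGL h12 => hord.sup_leadIdeal_lt hG hGL h12) fun _ => le_sup_left

section Graded

variable [LinearOrder (Word n)] {d : Fin n → ℕ} {f : FreeAlg R n}

theorem coeff_LH (d : Fin n → ℕ) (f : FreeAlg R n) (w : Word n) :
    (LH d f).coeff w = if wdeg d w = maxdeg d f then f.coeff w else 0 := by
  simp only [LH, coeff_sum, Finsupp.finsetSum_apply, coeff_single, Finsupp.single_apply,
    Finset.sum_ite_eq', Finset.mem_filter, Finsupp.mem_support_iff]
  split_ifs <;> simp_all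

theorem IsGradedMonomialOrder.wdeg_LMon (hord : IsGradedMonomialOrder d) (hf : f ≠ 0) :
    wdeg d (LMon f) = maxdeg d f := by
  refine le_antisymm (Finset.le_sup (LMon_mem_support hf)) (Finset.sup_le fun u hu => ?_)
  by_contra hlt
  exact (le_LMon hu).not_gt (hord.2 _ _ (not_le.mp hlt))

theorem IsGradedMonomialOrder.coeff_LH_LMon (hord : IsGradedMonomialOrder d) (hf : f ≠ 0) :
    (LH d f).coeff (LMon f) = LCoef f := by
  rw [coeff_LH, if_pos (hord.wdeg_LMon hf), LCoef]

theorem IsGradedMonomialOrder.LH_ne_zero (hord : IsGradedMonomialOrder d) (hf : f ≠ 0) :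
    LH d f ≠ 0 := fun h0 =>
  coeff_LMon_ne_zero hf (by simpa [h0, LCoef] using (hord.coeff_LH_LMon hf).symm)

theorem IsGradedMonomialOrder.LMon_LH (hord : IsGradedMonomialOrder d) (hf : f ≠ 0) :
    LMon (LH d f) = LMon f := by
  refine LMon_eq_of_coeff_ne_zero (by rw [hord.coeff_LH_LMon hf]; exact coeff_LMon_ne_zero hf)
    fun u hu => le_LMon (Finsupp.mem_support_iff.mpr fun h0 => ?_)
  rw [Finset.mem_coe, Finsupp.mem_support_iff, coeff_LH, h0, ite_self] at hu
  exact hu rfl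

theorem IsGradedMonomialOrder.isMonic_LH (hord : IsGradedMonomialOrder d) (hf : IsMonic f) :
    IsMonic (LH d f) := by
  refine ⟨hord.LH_ne_zero hf.1, ?_⟩
  rw [LCoef, hord.LMon_LH hf.1, hord.coeff_LH_LMon hf.1, hf.2]

theorem IsGradedMonomialOrder.LMset_LHset (hord : IsGradedMonomialOrder d)
    (G : Set (FreeAlg R n)) : LMset (LHset d G) = LMset G := by
  ext w
  constructor
  · rintro ⟨_, ⟨g, hg, hg0, rfl⟩, -, rfl⟩
    exact ⟨g, hg, hg0, (hord.LMon_LH hg0).symm⟩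
  · rintro ⟨g, hg, hg0, rfl⟩
    exact ⟨LH d g, ⟨g, hg, hg0, rfl⟩, hord.LH_ne_zero hg0, hord.LMon_LH hg0⟩

end Graded

theorem artinian_lifts_general [LinearOrder (Word n)]
    (d : Fin n → ℕ) (hord : IsGradedMonomialOrder d)
    (G : Set (FreeAlg R n)) (hGB : IsMonicGB G (TwoSidedIdeal.span G))
    (hA : IsArtinianRing (QuotRing (TwoSidedIdeal.span (mono R '' LMset G)))) :
    IsArtinianRing (QuotRing (TwoSidedIdeal.span (LHset d G))) ∧
    IsArtinianRing (QuotRing (TwoSidedIdeal.span G)) := by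
  have hLH : ∀ x ∈ LHset d G, IsMonic x := by
    rintro _ ⟨g, hg, -, rfl⟩
    exact hord.isMonic_LH (hGB.1 g hg)
  have : IsArtinianRing (QuotRing (TwoSidedIdeal.span (mono R '' LMset (LHset d G)))) := by
    rwa [hord.LMset_LHset]
  exact ⟨hord.1.isArtinianRing_quotRing_span _ hLH, hord.1.isArtinianRing_quotRing_span G hGB.1⟩

/-- If `G` is a monic Gröbner basis of `I = ⟨G⟩` with respect to an
ℕ-graded monomial ordering and the monomial algebra `R⟨X⟩/⟨LM(G)⟩` is left Artinian, then so are
`R⟨X⟩/⟨LH(G)⟩` and `A = R⟨X⟩/I`. -/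
theorem artinian_lifts [LinearOrder (Word n)]
    (d : Fin n → ℕ) (hd : ∀ i, 0 < d i) (hord : IsGradedMonomialOrder d)
    (G : Set (FreeAlg R n)) (hGB : IsMonicGB G (TwoSidedIdeal.span G))
    (hA : IsArtinianRing (QuotRing (TwoSidedIdeal.span (mono R '' LMset G)))) :
    IsArtinianRing (QuotRing (TwoSidedIdeal.span (LHset d G))) ∧
    IsArtinianRing (QuotRing (TwoSidedIdeal.span G)) :=
  artinian_lifts_general d hord G hGB hA
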